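/- Fix y' ∈ ℝ, a point p ∈ ℝ², and a finite nonempty set T ⊆ ℝ². Then: (i) there exists x* ∈ ℝ with h_{→p}((x*, y')) = h_{←T}((x*, y')); (ii) for every such x*, max_{q ∈ T} δ'_{pq}(y') = h_{←T}((x*, y')) = h_{→p}((x*, y')); and (iii) max_{q ∈ T} δ'_{pq}(y') = inf_{x ∈ ℝ} max{ h_{→p}((x, y')), h_{←T}((x, y')) }. -/

import Mathlib

open Metric Set

noncomputable section

/-- Points of the Euclidean plane ℝ². -/
abbrev Pt : Type := EuclideanSpace ℝ (Fin 2)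

/-- The point (x, y) ∈ ℝ². -/
def pt (x y : ℝ) : Pt := (WithLp.equiv 2 (Fin 2 → ℝ)).symm ![x, y]

/-- The leftward horizontal halfline ←p = {(x, y_p) : x ≤ x_p}. -/
def leftRay (p : Pt) : Set Pt := {z : Pt | z 1 = p 1 ∧ z 0 ≤ p 0}

/-- The rightward horizontal halfline →p = {(x, y_p) : x ≥ x_p}. -/
def rightRay (p : Pt) : Set Pt := {z : Pt | z 1 = p 1 ∧ p 0 ≤ z 0}

/-- h_{←p}(q): Euclidean distance from q to the leftward halfline at p. -/
def hL (p q : Pt) : ℝ := infDist q (leftRay p)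

/-- h_{→p}(q): Euclidean distance from q to the rightward halfline at p. -/
def hR (p q : Pt) : ℝ := infDist q (rightRay p)

/-- h_{←S}(q) = max_{p ∈ S} h_{←p}(q). -/
def hLS (S : Finset Pt) (hS : S.Nonempty) (q : Pt) : ℝ := S.sup' hS fun p => hL p q

/-- h_{→S}(q) = max_{p ∈ S} h_{→p}(q). -/
def hRS (S : Finset Pt) (hS : S.Nonempty) (q : Pt) : ℝ := S.sup' hS fun p => hR p q

/-- δ_{pq}(y) = inf_x max{‖(x,y) − p‖, ‖(x,y) − q‖}. -/
def delta (p q : Pt) (y : ℝ) : ℝ := ⨅ x : ℝ, max ‖pt x y - p‖ ‖pt x y - q‖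

/-- δ'_{pq}(y) = inf_x max{h_{←q}((x,y)), h_{→p}((x,y))}. -/
def delta' (p q : Pt) (y : ℝ) : ℝ := ⨅ x : ℝ, max (hL q (pt x y)) (hR p (pt x y))


/-!
Along the line y = y', the distance to the rightward ray →p is continuous and nonincreasing in x,
while h_{←T}, a maximum of distances to leftward rays, is continuous and nondecreasing. Their
graphs therefore cross, and at a crossing point x* the value h_{→p}((x*, y')) is the minimum of
max{h_{→p}, h_{←T}}. The same x* is a crossing point of h_{→p} with h_{←q} for any q attaining
the maximum in h_{←T}((x*, y')), which gives δ'_{pq}(y') = h_{→p}((x*, y')) for that q, while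
every other δ'_{pq}(y') is at most min_x max{h_{←T}, h_{→p}}.
-/

section CrossingInfimum

variable {α β : Type*} [LinearOrder α] [ConditionallyCompleteLinearOrder β] {f g : α → β}

lemma min_le_max_of_antitone_of_monotone (hf : Antitone f) (hg : Monotone g) (a x : α) :
    min (f a) (g a) ≤ max (f x) (g x) := by
  rcases le_total x a with h | h
  · exact (min_le_left _ _).trans ((hf h).trans (le_max_left _ _))
  · exact (min_le_right _ _).trans ((hg h).trans (le_max_right _ _))

lemma ciInf_max_eq_of_antitone_of_monotone (hf : Antitone f) (hg : Monotone g) {a : α}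
    (h : f a = g a) : ⨅ x, max (f x) (g x) = f a := by
  have hlow : ∀ x, f a ≤ max (f x) (g x) := fun x => by
    simpa [h] using min_le_max_of_antitone_of_monotone hf hg a x
  have : Nonempty α := ⟨a⟩
  refine le_antisymm ?_ (le_ciInf hlow)
  calc ⨅ x, max (f x) (g x) ≤ max (f a) (g a) := ciInf_le ⟨f a, forall_mem_range.2 hlow⟩ a
    _ = f a := by rw [h, max_self]

end CrossingInfimum

@[simp] lemma pt_zero (x y : ℝ) : pt x y 0 = x := rfl

@[simp] lemma pt_one (x y : ℝ) : pt x y 1 = y := rfl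

lemma dist_pt (x y : ℝ) (z : Pt) : dist (pt x y) z = √((x - z 0) ^ 2 + (y - z 1) ^ 2) := by
  simp [EuclideanSpace.dist_eq, Fin.sum_univ_two, Real.dist_eq, sq_abs]

lemma infDist_pt_horizontal {I : Set ℝ} {x y c u : ℝ} (hu : u ∈ I)
    (hnearest : ∀ v ∈ I, |x - u| ≤ |x - v|) :
    infDist (pt x y) {z : Pt | z 1 = c ∧ z 0 ∈ I} = √((x - u) ^ 2 + (y - c) ^ 2) := by
  have hmem : pt u c ∈ {z : Pt | z 1 = c ∧ z 0 ∈ I} := ⟨rfl, hu⟩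
  refine le_antisymm ?_ ((le_infDist ⟨_, hmem⟩).2 ?_)
  · exact (infDist_le_dist_of_mem hmem).trans_eq (by simp [dist_pt])
  · rintro z ⟨hz, hzI⟩
    rw [dist_pt, hz]
    gcongr √(?_ + _)
    exact sq_le_sq.2 (hnearest _ hzI)

lemma hR_pt (p : Pt) (x y : ℝ) : hR p (pt x y) = √(max (p 0 - x) 0 ^ 2 + (y - p 1) ^ 2) := by
  have hnearest : ∀ v ∈ Ici (p 0), |x - max x (p 0)| ≤ |x - v| := fun v (hv : p 0 ≤ v) => by grind
  change infDist _ {z : Pt | z 1 = p 1 ∧ z 0 ∈ Ici (p 0)} = _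
  rw [infDist_pt_horizontal (mem_Ici.2 (le_max_right x (p 0))) hnearest]
  grind

lemma hL_pt (q : Pt) (x y : ℝ) : hL q (pt x y) = √(max (x - q 0) 0 ^ 2 + (y - q 1) ^ 2) := by
  have hnearest : ∀ v ∈ Iic (q 0), |x - min x (q 0)| ≤ |x - v| := fun v (hv : v ≤ q 0) => by grind
  change infDist _ {z : Pt | z 1 = q 1 ∧ z 0 ∈ Iic (q 0)} = _
  rw [infDist_pt_horizontal (mem_Iic.2 (min_le_right x (q 0))) hnearest]
  grind

lemma antitone_hR (p : Pt) (y : ℝ) : Antitone fun x => hR p (pt x y) := fun a b hab => by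
  simp only [hR_pt]
  gcongr

lemma monotone_hL (q : Pt) (y : ℝ) : Monotone fun x => hL q (pt x y) := fun a b hab => by
  simp only [hL_pt]
  gcongr

lemma continuous_hR (p : Pt) (y : ℝ) : Continuous fun x => hR p (pt x y) := by
  simp only [hR_pt]
  fun_prop

lemma continuous_hL (q : Pt) (y : ℝ) : Continuous fun x => hL q (pt x y) := by
  simp only [hL_pt]
  fun_prop

lemma hR_pt_of_le {p : Pt} {x : ℝ} (y : ℝ) (h : p 0 ≤ x) : hR p (pt x y) = |y - p 1| := by
  rw [hR_pt, max_eq_right (by linarith), sq, zero_mul, zero_add, Real.sqrt_sq_eq_abs]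

lemma hL_pt_of_le {q : Pt} {x : ℝ} (y : ℝ) (h : x ≤ q 0) : hL q (pt x y) = |y - q 1| := by
  rw [hL_pt, max_eq_right (by linarith), sq, zero_mul, zero_add, Real.sqrt_sq_eq_abs]

lemma sub_le_hR (p : Pt) (x y : ℝ) : p 0 - x ≤ hR p (pt x y) := by
  rw [hR_pt]
  refine (le_max_left _ 0).trans ((le_abs_self _).trans (Real.abs_le_sqrt ?_))
  nlinarith

lemma sub_le_hL (q : Pt) (x y : ℝ) : x - q 0 ≤ hL q (pt x y) := by
  rw [hL_pt]
  refine (le_max_left _ 0).trans ((le_abs_self _).trans (Real.abs_le_sqrt ?_))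
  nlinarith

lemma monotone_hLS (T : Finset Pt) (hT : T.Nonempty) (y : ℝ) :
    Monotone fun x => hLS T hT (pt x y) :=
  fun _ _ hab => Finset.sup'_mono_fun fun q _ => monotone_hL q y hab

lemma continuous_hLS (T : Finset Pt) (hT : T.Nonempty) (y : ℝ) :
    Continuous fun x => hLS T hT (pt x y) :=
  Continuous.finset_sup'_apply hT fun q _ => continuous_hL q y

/-- Far to the right `h_{→p}` is constant while `h_{←T}` grows linearly; far to the left the roles
are swapped. -/
lemma exists_hR_eq_hLS (p : Pt) (T : Finset Pt) (hT : T.Nonempty) (y : ℝ) :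
    ∃ x, hR p (pt x y) = hLS T hT (pt x y) := by
  obtain ⟨q₀, hq₀⟩ := id hT
  set C := T.sup' hT fun q => |y - q 1|
  set a := min (T.inf' hT fun q => q 0) (p 0 - C)
  set b := max (p 0) (q₀ 0 + |y - p 1|)
  refine intermediate_value_univ₂ (a := b) (b := a) (continuous_hR p y) (continuous_hLS T hT y)
    ?_ ?_
  · calc hR p (pt b y) = |y - p 1| := hR_pt_of_le y (le_max_left _ _)
      _ ≤ b - q₀ 0 := by linarith [le_max_right (p 0) (q₀ 0 + |y - p 1|)]
      _ ≤ hL q₀ (pt b y) := sub_le_hL q₀ b y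
      _ ≤ hLS T hT (pt b y) := Finset.le_sup' (fun q => hL q (pt b y)) hq₀
  · calc hLS T hT (pt a y) ≤ C := Finset.sup'_le _ _ fun q hq =>
          (hL_pt_of_le y ((min_le_left _ _).trans (Finset.inf'_le _ hq))).trans_le
            (Finset.le_sup' (fun q => |y - q 1|) hq)
      _ ≤ p 0 - a := by linarith [min_le_right (T.inf' hT fun q => q 0) (p 0 - C)]
      _ ≤ hR p (pt a y) := sub_le_hR p a y

lemma delta'_le_ciInf_max_hR_hLS {p q : Pt} {T : Finset Pt} (hT : T.Nonempty) (hq : q ∈ T)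
    (y : ℝ) : delta' p q y ≤ ⨅ x, max (hR p (pt x y)) (hLS T hT (pt x y)) :=
  ciInf_mono ⟨0, forall_mem_range.2 fun _ => le_max_of_le_left infDist_nonneg⟩ fun x =>
    (max_comm _ _).trans_le (max_le_max le_rfl (Finset.le_sup' (fun q => hL q (pt x y)) hq))

lemma delta'_eq_hR_of_hR_eq_hL {p q : Pt} {x y : ℝ} (h : hR p (pt x y) = hL q (pt x y)) :
    delta' p q y = hR p (pt x y) := by
  simp only [delta', max_comm (hL q _)]
  exact ciInf_max_eq_of_antitone_of_monotone (antitone_hR p y) (monotone_hL q y) h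

lemma sup'_delta'_eq_hR {p : Pt} {T : Finset Pt} {hT : T.Nonempty} {x y : ℝ}
    (h : hR p (pt x y) = hLS T hT (pt x y)) :
    T.sup' hT (fun q => delta' p q y) = hR p (pt x y) := by
  obtain ⟨q₀, hq₀, hmax⟩ := Finset.exists_mem_eq_sup' hT fun q => hL q (pt x y)
  refine le_antisymm (Finset.sup'_le _ _ fun q hq => ?_) ?_
  · rw [← ciInf_max_eq_of_antitone_of_monotone (antitone_hR p y) (monotone_hLS T hT y) h]
    exact delta'_le_ciInf_max_hR_hLS hT hq y
  · rw [← delta'_eq_hR_of_hR_eq_hL (h.trans hmax)]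
    exact Finset.le_sup' (fun q => delta' p q y) hq₀

theorem stmt_9 (y' : ℝ) (p : Pt) (T : Finset Pt) (hT : T.Nonempty) :
    (∃ xs : ℝ, hR p (pt xs y') = hLS T hT (pt xs y')) ∧
    (∀ xs : ℝ, hR p (pt xs y') = hLS T hT (pt xs y') →
      T.sup' hT (fun q => delta' p q y') = hLS T hT (pt xs y') ∧
      T.sup' hT (fun q => delta' p q y') = hR p (pt xs y')) ∧
    T.sup' hT (fun q => delta' p q y') =
      ⨅ x : ℝ, max (hR p (pt x y')) (hLS T hT (pt x y')) := by
  obtain ⟨xs, hxs⟩ := exists_hR_eq_hLS p T hT y'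
  refine ⟨⟨xs, hxs⟩, fun x hx => ⟨(sup'_delta'_eq_hR hx).trans hx, sup'_delta'_eq_hR hx⟩, ?_⟩
  rw [sup'_delta'_eq_hR hxs,
    ciInf_max_eq_of_antitone_of_monotone (antitone_hR p y') (monotone_hLS T hT y') hxs]
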